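/- For every c ∈ ℂ^{ℤ_d×ℤ_d}, the operator L satisfies the compact form Lc = F*(F ∘ (F* c F*)), where ∘ denotes the Hadamard (entrywise) product of d×d matrices and juxtaposition denotes matrix multiplication. -/

import Mathlib

open Matrix Complex

/-- `ω = exp(2πi/d)`, a primitive `d`-th root of unity. -/
noncomputable def omegaRoot (d : ℕ) : ℂ := Complex.exp (2 * Real.pi * Complex.I / d)

/-- `μ = exp(2πi/(2d))`. -/
noncomputable def muRoot (d : ℕ) : ℂ := Complex.exp (2 * Real.pi * Complex.I / (2 * d))

/-- The cyclic shift matrix `S`, `S_{jk} = δ_{j,k+1}`. -/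
def Smat (d : ℕ) [NeZero d] : Matrix (ZMod d) (ZMod d) ℂ :=
  Matrix.of fun j k => if j = k + 1 then 1 else 0

/-- The modulation matrix `Ω`, `Ω_{jk} = ω^j δ_{jk}`. -/
noncomputable def Omat (d : ℕ) [NeZero d] : Matrix (ZMod d) (ZMod d) ℂ :=
  Matrix.of fun j k => if j = k then omegaRoot d ^ j.val else 0

/-- The Fourier matrix `F`, `F_{jk} = ω^{jk}/√d`. -/
noncomputable def Fmat (d : ℕ) [NeZero d] : Matrix (ZMod d) (ZMod d) ℂ :=
  Matrix.of fun j k => omegaRoot d ^ (j.val * k.val) / (Real.sqrt d : ℂ)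

/-- The diagonal matrix `R`, `R_{jj} = μ^{j(j+d)}`. -/
noncomputable def Rmat (d : ℕ) [NeZero d] : Matrix (ZMod d) (ZMod d) ℂ :=
  Matrix.of fun j k => if j = k then muRoot d ^ (j.val * (j.val + d)) else 0

/-- The operator `L`, `Lc = (1/d) Σ_{j,k} c_{jk} S^{-j} Ω^{-k}`. -/
noncomputable def Lop (d : ℕ) [NeZero d] (c : Matrix (ZMod d) (ZMod d) ℂ) :
    Matrix (ZMod d) (ZMod d) ℂ :=
  (1 / (d : ℂ)) • ∑ j : ZMod d, ∑ k : ZMod d, c j k • ((Smat d ^ j.val)⁻¹ * (Omat d ^ k.val)⁻¹)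

/-!
Write `ψ = ZMod.stdAddChar`, so that `ω^{jk} = ψ(jk)` and `F_{jk} = ψ(jk)/√d`. Since `S^d = Ω^d = 1`,
the matrix `S^{-j} Ω^{-k}` has `(a, b)` entry `δ_{b, a+j} ψ(-bk)`, hence
`(Lc)_{ab} = d⁻¹ Σ_k c_{b-a,k} ψ(-bk) = d^{-1/2} (c F*)_{b-a,b}`.
On the other side `F*_{am} F_{mb} = d⁻¹ ψ(m(b-a))`, and orthogonality of characters,
`Σ_m ψ(mt) = d δ_{t,0}`, collapses `(F* (F ∘ (F* Y)))_{ab}` to `d^{-1/2} Y_{b-a,b}`;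
take `Y = c F*`.
-/

open ZMod

namespace Matrix

variable {n R : Type*} [Fintype n] [DecidableEq n] [CommRing R]

theorem inv_pow_val_eq_pow_val_neg {d : ℕ} [NeZero d] {A : Matrix n n R} (hA : A ^ d = 1)
    (j : ZMod d) : (A ^ j.val)⁻¹ = A ^ (-j).val := by
  refine inv_eq_left_inv ?_
  obtain ⟨q, hq⟩ : d ∣ (-j).val + j.val := by
    rw [← ZMod.natCast_eq_zero_iff]
    push_cast [natCast_zmod_val]
    exact neg_add_cancel j
  rw [← pow_add, hq, pow_mul, hA, one_pow]

end Matrix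

theorem ofReal_sqrt_natCast_mul_self (d : ℕ) : (Real.sqrt d : ℂ) * Real.sqrt d = d := by
  rw [← Complex.ofReal_mul, Real.mul_self_sqrt (Nat.cast_nonneg d), Complex.ofReal_natCast]

section
variable {d : ℕ} [NeZero d]

theorem sum_stdAddChar_mul (t : ZMod d) :
    ∑ m : ZMod d, stdAddChar (m * t) = if t = 0 then (d : ℂ) else 0 := by
  rw [AddChar.sum_mulShift t (isPrimitive_stdAddChar d), ZMod.card]
  split_ifs <;> simp

theorem omegaRoot_pow (n : ℕ) : omegaRoot d ^ n = stdAddChar (n : ZMod d) := by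
  rw [omegaRoot, ← Complex.exp_nat_mul, stdAddChar_apply, toCircle_natCast]
  ring_nf

theorem omegaRoot_pow_val (j : ZMod d) : omegaRoot d ^ j.val = stdAddChar j := by
  rw [omegaRoot_pow, natCast_zmod_val]

theorem omegaRoot_pow_val_mul_val (j k : ZMod d) :
    omegaRoot d ^ (j.val * k.val) = stdAddChar (j * k) := by
  rw [omegaRoot_pow]
  push_cast [natCast_zmod_val]
  rfl

theorem Fmat_apply (j k : ZMod d) : Fmat d j k = stdAddChar (j * k) / (Real.sqrt d : ℂ) := by
  rw [Fmat, of_apply, omegaRoot_pow_val_mul_val]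

theorem conjTranspose_Fmat_apply (j k : ZMod d) :
    (Fmat d)ᴴ j k = stdAddChar (-(j * k)) / (Real.sqrt d : ℂ) := by
  rw [conjTranspose_apply, Fmat_apply, star_div₀, Complex.star_def, Complex.conj_ofReal,
    ← AddChar.map_neg_eq_conj, mul_comm]

theorem Smat_pow_apply (n : ℕ) (a b : ZMod d) :
    (Smat d ^ n) a b = if a = b + n then 1 else 0 := by
  induction n generalizing b with
  | zero => simp [one_apply]
  | succ n ih =>
    rw [pow_succ, mul_apply, Finset.sum_eq_single (b + 1)]
    · rw [ih, Smat, of_apply, if_pos rfl, mul_one]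
      push_cast
      ring_nf
    · intro x _ hx
      simp [Smat, hx]
    · simp

theorem Omat_pow (n : ℕ) : Omat d ^ n = diagonal fun a => stdAddChar (a * (n : ZMod d)) := by
  have hOmat : Omat d = diagonal fun a => stdAddChar a := by
    ext a b
    simp [Omat, diagonal_apply, omegaRoot_pow_val]
  ext a b
  simp [hOmat, diagonal_pow, diagonal_apply, ← AddChar.map_nsmul_eq_pow, mul_comm]

theorem Smat_pow_self : Smat d ^ d = 1 := by
  ext a b
  rw [Smat_pow_apply, natCast_self, add_zero, one_apply]

theorem Omat_pow_self : Omat d ^ d = 1 := by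
  simp [Omat_pow]

theorem Lop_apply (c : Matrix (ZMod d) (ZMod d) ℂ) (a b : ZMod d) :
    Lop d c a b = (d : ℂ)⁻¹ * ∑ k, c (b - a) k * stdAddChar (-(b * k)) := by
  simp only [Lop, inv_pow_val_eq_pow_val_neg Smat_pow_self,
    inv_pow_val_eq_pow_val_neg Omat_pow_self]
  simp only [Omat_pow, Smat_pow_apply, mul_diagonal, Matrix.smul_apply, Matrix.sum_apply,
    natCast_zmod_val, smul_eq_mul, one_div, mul_neg, ite_mul, one_mul, zero_mul, mul_ite, mul_zero]
  have hshift (j : ZMod d) : a = b + -j ↔ j = b - a := by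
    rw [← sub_eq_add_neg, eq_sub_iff_add_eq, eq_sub_iff_add_eq, add_comm]
  rw [Finset.sum_comm]
  simp only [hshift, Finset.sum_ite_eq', Finset.mem_univ, if_true]

theorem conjTranspose_Fmat_mul_hadamard_apply (Z : Matrix (ZMod d) (ZMod d) ℂ) (a b : ZMod d) :
    ((Fmat d)ᴴ * (Fmat d ⊙ Z)) a b = (d : ℂ)⁻¹ * ∑ m, stdAddChar (m * (b - a)) * Z m b := by
  simp only [mul_apply, hadamard_apply, conjTranspose_Fmat_apply, Fmat_apply, Finset.mul_sum]
  refine Finset.sum_congr rfl fun m _ => ?_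
  rw [mul_sub, sub_eq_add_neg, AddChar.map_add_eq_mul, mul_comm a m,
    ← ofReal_sqrt_natCast_mul_self d]
  ring

theorem conjTranspose_Fmat_mul_hadamard_conjTranspose_Fmat_mul_apply
    (Y : Matrix (ZMod d) (ZMod d) ℂ) (a b : ZMod d) :
    ((Fmat d)ᴴ * (Fmat d ⊙ ((Fmat d)ᴴ * Y))) a b = (Real.sqrt d : ℂ)⁻¹ * Y (b - a) b := by
  rw [conjTranspose_Fmat_mul_hadamard_apply]
  simp only [mul_apply, conjTranspose_Fmat_apply, Finset.mul_sum]
  have hchar (m i : ZMod d) :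
      stdAddChar (m * (b - a)) * stdAddChar (-(m * i)) = stdAddChar (m * (b - a - i)) := by
    rw [← AddChar.map_add_eq_mul]
    ring_nf
  calc _ = ∑ i, (d : ℂ)⁻¹ * (Real.sqrt d : ℂ)⁻¹ * Y i b * ∑ m, stdAddChar (m * (b - a - i)) := by
        rw [Finset.sum_comm]
        refine Finset.sum_congr rfl fun i _ => ?_
        rw [Finset.mul_sum]
        refine Finset.sum_congr rfl fun m _ => ?_
        rw [← hchar]
        ring
    _ = _ := by
        simp_rw [sum_stdAddChar_mul, sub_eq_zero, mul_ite, mul_zero, Finset.sum_ite_eq,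
          Finset.mem_univ, if_true]
        rw [mul_comm, ← mul_assoc, ← mul_assoc, mul_inv_cancel₀ (NeZero.ne (d : ℂ)), one_mul]

end

theorem stmt9_general (d : ℕ) [NeZero d] (c : Matrix (ZMod d) (ZMod d) ℂ) :
    Lop d c = (Fmat d)ᴴ * Matrix.hadamard (Fmat d) ((Fmat d)ᴴ * c * (Fmat d)ᴴ) := by
  ext a b
  rw [Matrix.mul_assoc, conjTranspose_Fmat_mul_hadamard_conjTranspose_Fmat_mul_apply, Lop_apply,
    mul_apply, Finset.mul_sum, Finset.mul_sum]
  refine Finset.sum_congr rfl fun k _ => ?_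
  rw [conjTranspose_Fmat_apply, ← ofReal_sqrt_natCast_mul_self d, mul_inv, mul_comm b k]
  ring

theorem stmt9 (d : ℕ) [NeZero d] (hd : 2 ≤ d) (c : Matrix (ZMod d) (ZMod d) ℂ) :
    Lop d c = (Fmat d)ᴴ * Matrix.hadamard (Fmat d) ((Fmat d)ᴴ * c * (Fmat d)ᴴ) :=
  stmt9_general d c
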